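/- arXiv:math/0206261 — 2 statements merged into one kernel-verified Lean document; each statement's English description precedes it below -/
import Mathlib

section
/- Let k → A be a ring homomorphism, D = (D_0, D_1, ...) a Hasse–Schmidt derivation of A over k, and S ⊆ A a multiplicatively closed subset. Then D extends uniquely to a Hasse–Schmidt derivation of the localization S^{-1}A over k, i.e. there is a unique Hasse–Schmidt derivation D' of S^{-1}A over k with D'_i ∘ ι = ι ∘ D_i for all i, where ι : A → S^{-1}A is the localization map. -/
/-!
A family `D` of `k`-linear maps is a Hasse–Schmidt derivation exactly when
`x ↦ ∑ Dᵢ(x) Xⁱ` is a `k`-algebra map `R → R⟦X⟧` splitting the constant coefficient.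
For `A`, composing with `A⟦X⟧ → B⟦X⟧` sends each `s ∈ S` to a series with unit constant
term, hence to a unit, so the universal property of `B = S⁻¹A` extends this map uniquely to
`B → B⟦X⟧`; its coefficients are the extension.
-/

open PowerSeries Finset

noncomputable section

section HasseSchmidt

variable {k R : Type*} [CommRing k] [CommRing R] [Algebra k R]

def IsHasseSchmidt (D : ℕ → (R →ₗ[k] R)) : Prop :=
  D 0 = LinearMap.id ∧
    ∀ i, 0 < i → ∀ x y : R, D i (x * y) = ∑ p ∈ antidiagonal i, D p.1 x * D p.2 y

def hasseSchmidtSeries (D : ℕ → (R →ₗ[k] R)) : R →ₗ[k] R⟦X⟧ where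
  toFun x := PowerSeries.mk fun i => D i x
  map_add' x y := by ext; simp
  map_smul' c x := by ext; simp

@[simp]
theorem coeff_hasseSchmidtSeries (D : ℕ → (R →ₗ[k] R)) (n : ℕ) (x : R) :
    coeff n (hasseSchmidtSeries D x) = D n x :=
  coeff_mk n fun i => D i x

def coeffLinearMap (φ : R →ₐ[k] R⟦X⟧) (n : ℕ) : R →ₗ[k] R :=
  (coeff n).restrictScalars k ∘ₗ φ.toLinearMap

theorem isHasseSchmidt_coeffLinearMap (φ : R →ₐ[k] R⟦X⟧)
    (hφ : ∀ x, constantCoeff (φ x) = x) : IsHasseSchmidt (coeffLinearMap φ) := by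
  refine ⟨LinearMap.ext fun x => ?_, fun i _ x y => ?_⟩
  · simp [coeffLinearMap, hφ]
  · simp [coeffLinearMap, coeff_mul]

namespace IsHasseSchmidt

variable {D : ℕ → (R →ₗ[k] R)}

theorem hasseSchmidtSeries_mul (hD : IsHasseSchmidt D) (x y : R) :
    hasseSchmidtSeries D (x * y) = hasseSchmidtSeries D x * hasseSchmidtSeries D y := by
  ext n
  rw [coeff_mul, coeff_hasseSchmidtSeries]
  rcases Nat.eq_zero_or_pos n with rfl | hn
  · simp [hD.1]
  · simp [hD.2 n hn]

theorem hasseSchmidtSeries_one (hD : IsHasseSchmidt D) : hasseSchmidtSeries D 1 = 1 := by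
  have hunit : IsUnit (hasseSchmidtSeries D 1) := by
    rw [isUnit_iff_constantCoeff, ← coeff_zero_eq_constantCoeff_apply,
      coeff_hasseSchmidtSeries, hD.1]
    exact isUnit_one
  -- an idempotent unit is `1`
  simpa using hunit.mul_eq_left.1 (by rw [← hD.hasseSchmidtSeries_mul, mul_one])

def toAlgHom (hD : IsHasseSchmidt D) : R →ₐ[k] R⟦X⟧ :=
  AlgHom.ofLinearMap (hasseSchmidtSeries D) hD.hasseSchmidtSeries_one hD.hasseSchmidtSeries_mul

@[simp]
theorem coeff_toAlgHom (hD : IsHasseSchmidt D) (n : ℕ) (x : R) :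
    coeff n (hD.toAlgHom x) = D n x :=
  coeff_hasseSchmidtSeries D n x

theorem coeffLinearMap_toAlgHom (hD : IsHasseSchmidt D) : coeffLinearMap hD.toAlgHom = D := by
  funext n
  ext x
  exact hD.coeff_toAlgHom n x

end IsHasseSchmidt

end HasseSchmidt

namespace IsHasseSchmidt

variable {k A B : Type*} [CommRing k] [CommRing A] [CommRing B]
  [Algebra k A] [Algebra k B] [Algebra A B] [IsScalarTower k A B]
  (S : Submonoid A) [IsLocalization S B] {D : ℕ → (A →ₗ[k] A)}

def localizationAlgHom (hD : IsHasseSchmidt D) : B →ₐ[k] B⟦X⟧ :=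
  IsLocalization.liftAlgHom (M := S)
    (f := (mapAlgHom (IsScalarTower.toAlgHom k A B)).comp hD.toAlgHom) fun s => by
      rw [isUnit_iff_constantCoeff, ← coeff_zero_eq_constantCoeff_apply]
      simpa [mapAlgHom_apply, coeff_map, hD.1] using IsLocalization.map_units B s

theorem coeff_localizationAlgHom_algebraMap (hD : IsHasseSchmidt D) (n : ℕ) (x : A) :
    coeff n (hD.localizationAlgHom S (algebraMap A B x)) = algebraMap A B (D n x) := by
  simp [localizationAlgHom, IsLocalization.lift_eq, mapAlgHom_apply, coeff_map]

theorem constantCoeff_localizationAlgHom (hD : IsHasseSchmidt D) (b : B) :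
    constantCoeff (hD.localizationAlgHom S b) = b := by
  suffices (constantCoeff (R := B)).comp (hD.localizationAlgHom S).toRingHom = RingHom.id B from
    RingHom.congr_fun this b
  refine IsLocalization.ringHom_ext S (RingHom.ext fun x => ?_)
  simpa [hD.1] using hD.coeff_localizationAlgHom_algebraMap S 0 x

theorem toAlgHom_eq_localizationAlgHom (hD : IsHasseSchmidt D) {E : ℕ → (B →ₗ[k] B)}
    (hE : IsHasseSchmidt E) (hED : ∀ n x, E n (algebraMap A B x) = algebraMap A B (D n x)) :
    hE.toAlgHom = hD.localizationAlgHom S := by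
  refine AlgHom.coe_ringHom_injective (IsLocalization.ringHom_ext S (RingHom.ext fun x => ?_))
  ext n
  simp [hED, hD.coeff_localizationAlgHom_algebraMap S]

end IsHasseSchmidt

/-- a Hasse–Schmidt derivation of `A` over `k` extends uniquely to a
Hasse–Schmidt derivation of the localization `S⁻¹A` over `k`. -/
theorem hasseSchmidt_extends_to_localization
    {k A B : Type*} [CommRing k] [CommRing A] [CommRing B]
    [Algebra k A] [Algebra k B] [Algebra A B] [IsScalarTower k A B]
    (S : Submonoid A) [IsLocalization S B]
    (D : ℕ → (A →ₗ[k] A))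
    (hD0 : D 0 = LinearMap.id)
    (hLeib : ∀ i, 0 < i → ∀ x y : A,
      D i (x * y) = ∑ p ∈ Finset.HasAntidiagonal.antidiagonal i, D p.1 x * D p.2 y) :
    ∃! D' : ℕ → (B →ₗ[k] B),
      (D' 0 = LinearMap.id ∧
        ∀ i, 0 < i → ∀ x y : B,
          D' i (x * y) = ∑ p ∈ Finset.HasAntidiagonal.antidiagonal i, D' p.1 x * D' p.2 y) ∧
      ∀ i (x : A), D' i (algebraMap A B x) = algebraMap A B (D i x) := by
  have hD : IsHasseSchmidt D := ⟨hD0, hLeib⟩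
  refine ⟨coeffLinearMap (hD.localizationAlgHom (B := B) S),
    ⟨isHasseSchmidt_coeffLinearMap _ (hD.constantCoeff_localizationAlgHom S),
      hD.coeff_localizationAlgHom_algebraMap S⟩, ?_⟩
  rintro E ⟨hE : IsHasseSchmidt E, hED⟩
  rw [← hE.coeffLinearMap_toAlgHom, hD.toAlgHom_eq_localizationAlgHom S hE hED]
end
end

section
/- Let (R, 𝔪, k) be a noetherian regular local ring of dimension n containing a field, with regular system of parameters X_1,...,X_n, quasi-coefficient field k_0 ⊆ R, and identify the completion R̂ = k[[X_1,...,X_n]]. If there exist k_0-derivations D_1,...,D_n of R and elements a_1,...,a_n ∈ R with det(D_i(a_j)) ∉ 𝔪, then Der_{k_0}(R) is a free R-module of rank n with basis {D_1,...,D_n}. -/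
/-!
A `k₀`-derivation `E` with `E aⱼ = 0` for all `j` vanishes: we show `E R ⊆ 𝔪 ^ m` for every `m`
and conclude by Krull's intersection theorem. Since `k/k₀` is formally smooth, the residue map
has a section `k → R ⧸ 𝔪 ^ (m + 2)`; lifting it to a map `τ : k → R`, formal unramifiedness applied
to `x ↦ x + E x • ε` shows that every `k₀`-derivation maps the image of `τ` into `𝔪 ^ (m + 1)`.
Then `bⱼ = aⱼ - τ (āⱼ)` lie in `𝔪` and `det (Dᵢ bⱼ) ≡ det (Dᵢ aⱼ) ∉ 𝔪`, which forces the `bⱼ` to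
generate `𝔪`. Writing `x = τ x̄ + ∑ rⱼ bⱼ` gives `E x ∈ 𝔪 ^ (m + 1)` from `E R ⊆ 𝔪 ^ m`.
Finally `E ↦ (E aⱼ)ⱼ` is injective and sends the `Dᵢ` to the rows of an invertible matrix.
-/

open IsLocalRing TrivSqZeroExt Matrix

namespace Derivation

variable {R A : Type*} [CommRing R] [CommRing A] [Algebra R A]

lemma apply_mem_pow_of_mem_pow_succ (E : Derivation R A A) (I : Ideal A) :
    ∀ N, ∀ x ∈ I ^ (N + 1), E x ∈ I ^ N := by
  intro N
  induction N with
  | zero => simp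
  | succ N ih =>
    intro x hx
    rw [pow_succ'] at hx
    refine Submodule.mul_induction_on hx (fun y hy z hz => ?_) (fun _ _ hx hy => ?_)
    · rw [E.leibniz, smul_eq_mul, smul_eq_mul]
      refine add_mem ?_ (Ideal.mul_mem_right _ _ hz)
      rw [pow_succ']
      exact Ideal.mul_mem_mul hy (ih z hz)
    · rw [map_add]
      exact add_mem hx hy

noncomputable def quotientDualNumberHom (E : Derivation R A A) (I : Ideal A) :
    A →ₐ[R] DualNumber (A ⧸ I) where
  toFun x := inl (Ideal.Quotient.mk I x) + inr (Ideal.Quotient.mk I (E x))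
  map_one' := by simp
  map_mul' x y := by ext <;> simp [E.leibniz, mul_comm]
  map_zero' := by simp
  map_add' x y := by ext <;> simp
  commutes' r := by ext <;> simp [algebraMap_eq_inl', Ideal.Quotient.mk_algebraMap]

@[simp]
lemma fst_quotientDualNumberHom (E : Derivation R A A) (I : Ideal A) (x : A) :
    (E.quotientDualNumberHom I x).fst = Ideal.Quotient.mk I x := by
  simp [quotientDualNumberHom]

@[simp]
lemma snd_quotientDualNumberHom (E : Derivation R A A) (I : Ideal A) (x : A) :
    (E.quotientDualNumberHom I x).snd = Ideal.Quotient.mk I (E x) := by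
  simp [quotientDualNumberHom]

/-- `ψ ∘ σ` and `inl ∘ σ` (with `ψ` induced by `x ↦ x + E x • ε`) agree after `fst`, whose kernel
squares to zero, so they are equal; comparing `ε`-parts gives `E x ≡ 0 mod I`. -/
lemma apply_mem_of_mk_mem_range {K : Type*} [CommRing K] [Algebra R K]
    [Algebra.FormallyUnramified R K] (E : Derivation R A A) {I J : Ideal A} (hJI : J ≤ I)
    (hEJ : ∀ x ∈ J, E x ∈ I) (σ : K →ₐ[R] A ⧸ J) {x : A}
    (hx : Ideal.Quotient.mk J x ∈ σ.range) : E x ∈ I := by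
  let ψ : A ⧸ J →ₐ[R] DualNumber (A ⧸ I) :=
    Ideal.Quotient.liftₐ J (E.quotientDualNumberHom I) fun y hy => by
      ext
      · simpa [Ideal.Quotient.eq_zero_iff_mem] using hJI hy
      · simpa [Ideal.Quotient.eq_zero_iff_mem] using hEJ y hy
  have hψ (y : A) : ψ (Ideal.Quotient.mk J y) = E.quotientDualNumberHom I y := rfl
  let fst : DualNumber (A ⧸ I) →+* A ⧸ I := (fstHom (A ⧸ I) (A ⧸ I) (A ⧸ I)).toRingHom
  have hfst : IsNilpotent (RingHom.ker fst) := ⟨2, kerIdeal_sq _ _⟩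
  have hψσ : ψ.comp σ =
      (inlAlgHom R (A ⧸ I) (A ⧸ I)).comp ((Ideal.Quotient.factorₐ R hJI).comp σ) := by
    refine Algebra.FormallyUnramified.ext' fst hfst _ _ fun c => ?_
    obtain ⟨y, hy⟩ := Ideal.Quotient.mk_surjective (σ c)
    simp [fst, ← hy, hψ]
  obtain ⟨c, hc⟩ := (AlgHom.mem_range σ).mp hx
  have hsnd := congr(($hψσ c).snd)
  rw [AlgHom.comp_apply, hc, hψ] at hsnd
  simpa [Ideal.Quotient.eq_zero_iff_mem] using hsnd

end Derivation

lemma Matrix.det_sub_det_mem {n R : Type*} [Fintype n] [DecidableEq n] [CommRing R]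
    (I : Ideal R) {M N : Matrix n n R} (h : ∀ i j, M i j - N i j ∈ I) : M.det - N.det ∈ I := by
  rw [← Ideal.Quotient.eq, RingHom.map_det, RingHom.map_det]
  congr 1
  ext i j
  exact Ideal.Quotient.eq.mpr (h i j)

lemma exists_basis_eq_of_injective_of_isUnit_det {R M ι : Type*} [CommRing R]
    [AddCommGroup M] [Module R M] [Fintype ι] [DecidableEq ι] (v : ι → M) (φ : M →ₗ[R] ι → R)
    (hφ : Function.Injective φ) (hdet : IsUnit (Matrix.of fun i j => φ (v i) j).det) :
    ∃ b : Module.Basis ι R M, ∀ i, b i = v i := by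
  set A : Matrix ι ι R := Matrix.of fun i j => φ (v i) j
  have hA : IsUnit A := (Matrix.isUnit_iff_isUnit_det A).mpr hdet
  have hφv (g : ι → R) : φ (∑ i, g i • v i) = g ᵥ* A := by
    ext j
    simp [vecMul, dotProduct, A]
  have hli : LinearIndependent R v := by
    refine Fintype.linearIndependent_iff.mpr fun g hg => ?_
    have hg0 : g = 0 := vecMul_injective_of_isUnit hA <| by
      change g ᵥ* A = 0 ᵥ* A
      rw [← hφv, hg, map_zero, zero_vecMul]
    simp [hg0]
  have hsp : ⊤ ≤ Submodule.span R (Set.range v) := by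
    rintro x -
    obtain ⟨g, hg⟩ := (vecMul_surjective_iff_isUnit.mpr hA) (φ x)
    rw [← hφ ((hφv g).trans hg)]
    exact Submodule.sum_mem _ fun i _ => Submodule.smul_mem _ _ (Submodule.subset_span ⟨i, rfl⟩)
  exact ⟨Module.Basis.mk hli hsp, Module.Basis.mk_apply hli hsp⟩

namespace IsLocalRing

variable {R k₀ : Type*} [CommRing R] [IsLocalRing R] [CommRing k₀] [Algebra k₀ R]

/-- Writing `b = G *ᵥ X`, the determinant of `(Dᵢ bⱼ)` is `det (Dᵢ Xₜ) * det G` modulo `𝔪`,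
so `G` is invertible and `X = G⁻¹ *ᵥ b`. -/
lemma span_eq_maximalIdeal_of_det_derivation_notMem {ι : Type*} [Fintype ι] [DecidableEq ι]
    {X b : ι → R} (hX : Ideal.span (Set.range X) = maximalIdeal R)
    (hb : ∀ j, b j ∈ maximalIdeal R) (D : ι → Derivation k₀ R R)
    (hdet : (Matrix.of fun i j => D i (b j)).det ∉ maximalIdeal R) :
    Ideal.span (Set.range b) = maximalIdeal R := by
  have hXm (t : ι) : X t ∈ maximalIdeal R := hX ▸ Ideal.subset_span (Set.mem_range_self t)
  choose g hg using fun j => Ideal.mem_span_range_iff_exists_fun.mp (hX ▸ hb j)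
  let G : Matrix ι ι R := Matrix.of g
  have hcong : ∀ i j,
      D i (b j) - (Matrix.of (fun i t => D i (X t)) * Gᵀ) i j ∈ maximalIdeal R := by
    intro i j
    rw [← hg j, map_sum, Matrix.mul_apply, ← Finset.sum_sub_distrib]
    refine Ideal.sum_mem _ fun t _ => ?_
    simp only [Derivation.leibniz, smul_eq_mul, Matrix.of_apply, Matrix.transpose_apply, G]
    rw [mul_comm (D i (X t)), add_sub_cancel_left]
    exact Ideal.mul_mem_right _ _ (hXm t)
  have hG : IsUnit G.det := by
    rw [← notMem_maximalIdeal]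
    intro hG
    have hdiff := Matrix.det_sub_det_mem _ hcong
    rw [Matrix.det_mul, Matrix.det_transpose] at hdiff
    have hsum := add_mem hdiff (Ideal.mul_mem_left _ (of fun i t => D i (X t)).det hG)
    rw [sub_add_cancel] at hsum
    exact hdet hsum
  have hXb : X = G⁻¹ *ᵥ b := by
    have hbG : b = G *ᵥ X := funext fun j => (hg j).symm
    rw [hbG, Matrix.mulVec_mulVec, Matrix.nonsing_inv_mul _ hG, Matrix.one_mulVec]
  refine le_antisymm (Ideal.span_le.mpr ?_) (hX ▸ Ideal.span_le.mpr ?_)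
  · rintro _ ⟨j, rfl⟩
    exact hb j
  · rintro _ ⟨t, rfl⟩
    rw [hXb]
    exact Ideal.mem_span_range_iff_exists_fun.mpr ⟨_, rfl⟩

lemma derivation_apply_mem_pow_succ {ι : Type*} [Fintype ι] [DecidableEq ι] {X : ι → R}
    (hX : Ideal.span (Set.range X) = maximalIdeal R) (D : ι → Derivation k₀ R R) (a : ι → R)
    (hdet : (Matrix.of fun i j => D i (a j)).det ∉ maximalIdeal R) {m : ℕ}
    {τ : ResidueField R → R} (hτ : ∀ c, residue R (τ c) = c)
    (hτE : ∀ (E : Derivation k₀ R R) c, E (τ c) ∈ maximalIdeal R ^ (m + 1))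
    (E : Derivation k₀ R R) (hEa : ∀ j, E (a j) = 0) (hE : ∀ x, E x ∈ maximalIdeal R ^ m)
    (x : R) : E x ∈ maximalIdeal R ^ (m + 1) := by
  have hτ𝔪 (F : Derivation k₀ R R) (c) : F (τ c) ∈ maximalIdeal R :=
    Ideal.pow_le_self m.succ_ne_zero (hτE F c)
  have hsub (y : R) : y - τ (residue R y) ∈ maximalIdeal R := by
    rw [← residue_eq_zero_iff, map_sub, hτ, sub_self]
  set b : ι → R := fun j => a j - τ (residue R (a j))
  have hspan : Ideal.span (Set.range b) = maximalIdeal R := by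
    refine span_eq_maximalIdeal_of_det_derivation_notMem hX (fun j => hsub (a j)) D fun h => ?_
    have hcong := Matrix.det_sub_det_mem (maximalIdeal R) (M := of fun i j => D i (b j))
      (N := of fun i j => D i (a j)) fun i j => by simpa [b] using hτ𝔪 (D i) _
    exact hdet (by simpa using sub_mem h hcong)
  obtain ⟨r, hr⟩ := Ideal.mem_span_range_iff_exists_fun.mp (hspan ▸ hsub x)
  have hx : x = τ (residue R x) + ∑ j, r j * b j := by rw [hr]; ring
  rw [hx, map_add, map_sum]
  refine add_mem (hτE E _) (Ideal.sum_mem _ fun j _ => ?_)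
  rw [E.leibniz, smul_eq_mul, smul_eq_mul]
  refine add_mem (Ideal.mul_mem_left _ _ ?_) (pow_succ' (maximalIdeal R) m ▸
    Ideal.mul_mem_mul (hsub (a j)) (hE (r j)))
  simpa [b, hEa] using hτE E (residue R (a j))

variable [Algebra k₀ (ResidueField R)] [IsScalarTower k₀ R (ResidueField R)]

lemma exists_residue_section [Algebra.FormallySmooth k₀ (ResidueField R)] (N : ℕ) :
    ∃ σ : ResidueField R →ₐ[k₀] R ⧸ maximalIdeal R ^ (N + 1),
      ∀ x c, Ideal.Quotient.mk _ x = σ c → residue R x = c := by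
  have hle : maximalIdeal R ^ (N + 1) ≤ maximalIdeal R := Ideal.pow_le_self N.succ_ne_zero
  let π : R ⧸ maximalIdeal R ^ (N + 1) →ₐ[k₀] ResidueField R :=
    Ideal.Quotient.liftₐ _ (IsScalarTower.toAlgHom k₀ R _) fun x hx =>
      (residue_eq_zero_iff x).mpr (hle hx)
  have hπ (x : R) : π (Ideal.Quotient.mk (maximalIdeal R ^ (N + 1)) x) = residue R x := rfl
  have hsurj : Function.Surjective π := fun c => by
    obtain ⟨x, rfl⟩ := residue_surjective c
    exact ⟨_, hπ x⟩
  have hker : RingHom.ker π ≤ (maximalIdeal R).map (Ideal.Quotient.mk _) := by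
    intro y hy
    obtain ⟨x, rfl⟩ := Ideal.Quotient.mk_surjective y
    exact Ideal.mem_map_of_mem _ ((residue_eq_zero_iff x).mp hy)
  have hnil : IsNilpotent (RingHom.ker π) := by
    refine ⟨N + 1, eq_bot_iff.mpr ?_⟩
    calc _ ≤ ((maximalIdeal R).map (Ideal.Quotient.mk _)) ^ (N + 1) :=
          Ideal.pow_right_mono hker _
      _ = ⊥ := by rw [← Ideal.map_pow, Ideal.map_quotient_self]
  refine ⟨Algebra.FormallySmooth.liftOfSurjective (AlgHom.id k₀ _) π hsurj hnil,
    fun x c hx => ?_⟩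
  rw [← hπ, hx, Algebra.FormallySmooth.liftOfSurjective_apply, AlgHom.id_apply]

lemma exists_residue_lift_forall_derivation_mem_pow
    [Algebra.FormallyEtale k₀ (ResidueField R)] (N : ℕ) :
    ∃ τ : ResidueField R → R, (∀ c, residue R (τ c) = c) ∧
      ∀ (E : Derivation k₀ R R) c, E (τ c) ∈ maximalIdeal R ^ N := by
  obtain ⟨σ, hσ⟩ := exists_residue_section (k₀ := k₀) (R := R) N
  choose τ hτ using fun c => Ideal.Quotient.mk_surjective (σ c)
  refine ⟨τ, fun c => hσ _ _ (hτ c), fun E c => ?_⟩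
  exact E.apply_mem_of_mk_mem_range (Ideal.pow_le_pow_right N.le_succ)
    (E.apply_mem_pow_of_mem_pow_succ _ N) σ ⟨c, (hτ c).symm⟩

lemma derivation_eq_zero_of_forall_apply_eq_zero [IsNoetherianRing R]
    [Algebra.FormallyEtale k₀ (ResidueField R)] {ι : Type*} [Fintype ι] [DecidableEq ι]
    {X : ι → R} (hX : Ideal.span (Set.range X) = maximalIdeal R) (D : ι → Derivation k₀ R R)
    (a : ι → R) (hdet : (Matrix.of fun i j => D i (a j)).det ∉ maximalIdeal R)
    (E : Derivation k₀ R R) (hEa : ∀ j, E (a j) = 0) : E = 0 := by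
  have hE (m : ℕ) (x : R) : E x ∈ maximalIdeal R ^ m := by
    induction m generalizing x with
    | zero => simp
    | succ m ih =>
      obtain ⟨τ, hτ, hτE⟩ :=
        exists_residue_lift_forall_derivation_mem_pow (R := R) (k₀ := k₀) (m + 1)
      exact derivation_apply_mem_pow_succ hX D a hdet hτ hτE E hEa ih x
  ext x
  have hx : E x ∈ ⨅ m : ℕ, maximalIdeal R ^ m := Submodule.mem_iInf _ |>.mpr (hE · x)
  rwa [Ideal.iInf_pow_eq_bot_of_isLocalRing _ (maximalIdeal.isMaximal R).ne_top] at hx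

end IsLocalRing

universe u

theorem derivations_free_of_det_unit_general
    {R k₀ : Type u} [CommRing R] [IsLocalRing R] [IsNoetherianRing R]
    [Field k₀] [Algebra k₀ R]
    [Algebra k₀ (IsLocalRing.ResidueField R)]
    [IsScalarTower k₀ R (IsLocalRing.ResidueField R)]
    (hqc : Algebra.FormallyEtale k₀ (IsLocalRing.ResidueField R))
    (n : ℕ) (X : Fin n → R)
    (hX : Ideal.span (Set.range X) = IsLocalRing.maximalIdeal R)
    (D : Fin n → Derivation k₀ R R) (a : Fin n → R)
    (hdet : (Matrix.of fun i j => D i (a j)).det ∉ IsLocalRing.maximalIdeal R) :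
    ∃ b : Module.Basis (Fin n) R (Derivation k₀ R R), ∀ i, b i = D i := by
  let evalAt : Derivation k₀ R R →ₗ[R] Fin n → R :=
    { toFun E j := E (a j)
      map_add' _ _ := rfl
      map_smul' _ _ := rfl }
  refine exists_basis_eq_of_injective_of_isUnit_det D evalAt
    ((injective_iff_map_eq_zero evalAt).mpr fun E hE => ?_) (notMem_maximalIdeal.mp hdet)
  exact derivation_eq_zero_of_forall_apply_eq_zero hX D a hdet E (congr_fun hE)

/-- part of Nomura's theorem: let `(R,𝔪,k)` be a noetherian regular local
ring of dimension `n ≥ 1` containing a field, with regular system of parameters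
`X_1,…,X_n` and quasi-coefficient field `k₀`. If there are `k₀`-derivations `D_1,…,D_n`
of `R` and `a_1,…,a_n ∈ R` with `det(D_i(a_j)) ∉ 𝔪`, then `Der_{k₀}(R)` is a free
`R`-module of rank `n` with basis `D_1,…,D_n`. -/
theorem derivations_free_of_det_unit
    {R k₀ : Type u} [CommRing R] [IsLocalRing R] [IsNoetherianRing R]
    [Field k₀] [Algebra k₀ R]
    [Algebra k₀ (IsLocalRing.ResidueField R)]
    [IsScalarTower k₀ R (IsLocalRing.ResidueField R)]
    (hqc : Algebra.FormallyEtale k₀ (IsLocalRing.ResidueField R))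
    (n : ℕ) (hn : 1 ≤ n) (X : Fin n → R)
    (hX : Ideal.span (Set.range X) = IsLocalRing.maximalIdeal R)
    (hdim : ringKrullDim R = n)
    (D : Fin n → Derivation k₀ R R) (a : Fin n → R)
    (hdet : (Matrix.of fun i j => D i (a j)).det ∉ IsLocalRing.maximalIdeal R) :
    ∃ b : Module.Basis (Fin n) R (Derivation k₀ R R), ∀ i, b i = D i :=
  derivations_free_of_det_unit_general hqc n X hX D a hdet
end
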